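/- arXiv:0904.1149 — 3 statements merged into one kernel-verified Lean document; each statement's English description precedes it below -/
import Mathlib

section
/- Kraft–Chaitin theorem: for every total recursive function f : ℕ⁺ → ℕ with Σ_{n=1}^∞ 2^{-f(n)} ≤ 1, there exists a total recursive injection g : ℕ⁺ → {0,1}* such that the range of g is prefix-free and |g(n)| = f(n) for all n. -/
open scoped Classical ENNReal

/-- A computer: a partial recursive function on binary strings with prefix-free domain. -/
structure Computer where
  f : List Bool →. List Bool
  partrec : Partrec f
  prefixFree : ∀ p q : List Bool, (f p).Dom → (f q).Dom → p <+: q → p = q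

/-- Program-size complexity `H_C(s)` (possibly `∞`). -/
noncomputable def Computer.H (C : Computer) (s : List Bool) : ℕ∞ :=
  sInf {n : ℕ∞ | ∃ p : List Bool, C.f p = Part.some s ∧ (p.length : ℕ∞) = n}

/-- Optimality: simulation of every computer with constant overhead in program length. -/
def Computer.IsOptimal (U : Computer) : Prop :=
  ∀ C : Computer, ∃ d : ℕ, ∀ p : List Bool, ∀ h : (C.f p).Dom,
    ∃ q : List Bool, U.f q = Part.some ((C.f p).get h) ∧ q.length ≤ p.length + d

/-- The halting probability of a computer. -/
noncomputable def Omega (V : Computer) : ℝ :=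
  ∑' p : {p : List Bool // (V.f p).Dom}, ((2 : ℝ) ^ p.val.length)⁻¹

/-- The first `n` bits of the base-two expansion of `α - ⌊α⌋` (with infinitely many zeros). -/
noncomputable def bits (α : ℝ) (n : ℕ) : List Bool :=
  (List.range n).map (fun i => decide (⌊Int.fract α * 2 ^ (i + 1)⌋ % 2 = 1))

/-- Weak Chaitin randomness relative to an optimal computer `U`:
`∃ c, ∀ n ≥ 1, n - c ≤ H(α ↾ n)`. -/
def WeaklyChaitinRandom (U : Computer) (α : ℝ) : Prop :=
  ∃ c : ℕ, ∀ n : ℕ, 1 ≤ n → (n : ℕ∞) ≤ U.H (bits α n) + c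

/-- The standard bijection `ℕ ≃ {0,1}*` (`s ↦ 1s - 1`). -/
def natToStr (n : ℕ) : List Bool := ((n + 1).bits).dropLast.reverse

/-- Complexity of a natural number. -/
noncomputable def HN (U : Computer) (a : ℕ) : ℕ∞ := U.H (natToStr a)

/-- Complexity of a pair of natural numbers (via a fixed recursive bijective pairing). -/
noncomputable def HPairN (U : Computer) (a b : ℕ) : ℕ∞ := U.H (natToStr (Nat.pair a b))

/-- All binary strings of length exactly `n`, in a canonical order. -/
def allOfLength : ℕ → List (List Bool)
  | 0 => [[]]
  | n + 1 => (allOfLength n).flatMap (fun l => [false :: l, true :: l])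

/-- All binary strings of length at most `n`, in a canonical order. -/
def allUpTo (n : ℕ) : List (List Bool) :=
  (List.range (n + 1)).flatMap allOfLength

/-- The canonical encoding (as a list) of `S ↾ n = {s ∈ S : |s| ≤ n}`. -/
noncomputable def restrictList (S : Set (List Bool)) (n : ℕ) : List (List Bool) :=
  (allUpTo n).filter (fun p => decide (p ∈ S))

/-- The domain (halting set) of a computer. -/
def domSet (V : Computer) : Set (List Bool) := {p | (V.f p).Dom}

/-- `Σ_{n=1}^∞ 2^{-f(n)}` (computed in `ℝ≥0∞`); here `f (n+1)` plays the role of `f(n)`,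
`f` being a function on positive integers. -/
noncomputable def kraftSum (f : ℕ → ℕ) : ℝ≥0∞ :=
  ∑' n : ℕ, ((2 : ℝ≥0∞) ^ f (n + 1))⁻¹

/-- A left-computable (r.e.) real. -/
def REReal (α : ℝ) : Prop :=
  ∃ g : ℕ → ℚ, Computable g ∧ (∀ n, (g n : ℝ) ≤ α) ∧
    Filter.Tendsto (fun n => (g n : ℝ)) Filter.atTop (nhds α)

/-- The term `2^{n - H(α ↾ n)}` (zero when `H(α ↾ n) = ∞`). -/
noncomputable def excessTerm (U : Computer) (α : ℝ) (n : ℕ) : ℝ :=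
  WithTop.recTopCoe 0 (fun h : ℕ => (2 : ℝ) ^ ((n : ℤ) - h)) (U.H (bits α n))

/-- The running time of the machine (code) `c` on input `p` (number of steps to halt). -/
noncomputable def runtime (c : Nat.Partrec.Code) (p : List Bool) : ℕ :=
  sInf {k : ℕ | (Nat.Partrec.Code.evaln k c (Encodable.encode p)).isSome = true}

/-- The deterministic machine (code) `c` computes the computer `V`. -/
def ComputesVia (c : Nat.Partrec.Code) (V : Computer) : Prop :=
  ∀ p : List Bool, c.eval (Encodable.encode p) = (V.f p).map Encodable.encode

/-- `T^M_n`: the maximum running time on halting inputs of length at most `n`. -/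
noncomputable def maxTime (c : Nat.Partrec.Code) (V : Computer) (n : ℕ) : ℕ :=
  sSup {t : ℕ | ∃ p : List Bool, (V.f p).Dom ∧ p.length ≤ n ∧ runtime c p = t}

/-- `L_M`: the minimum length of a halting input. -/
noncomputable def minLen (V : Computer) : ℕ :=
  sInf {k : ℕ | ∃ p : List Bool, (V.f p).Dom ∧ p.length = k}


/-!
Requests are served online from a *free list*: a finite prefix-antichain of strings with pairwise
distinct lengths and total measure `1 - Σ_{m ≤ n} 2^{-f(m)}`. To serve a request `l`, take the
longest free string `x` with `|x| ≤ l`; it exists because a finite set of distinct lengths all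
exceeding `l` has measure `< 2^{-l}`. Output `x 0^{l-|x|}` and return the remaining extensions
`x 0^j 1` (`j < l - |x|`) to the free list; their lengths `|x|+1, …, l` are not yet taken, by the
maximality of `x`. Every later codeword extends a free string, hence is incomparable with the
earlier ones.
-/

namespace KraftChaitin

def Incomparable {α : Type*} (a b : List α) : Prop := ¬ a <+: b ∧ ¬ b <+: a

namespace Incomparable

variable {α : Type*} {a b c : List α}

theorem symm (h : Incomparable a b) : Incomparable b a := ⟨h.2, h.1⟩

instance : Std.Symm (Incomparable (α := α)) := ⟨fun _ _ => symm⟩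

theorem of_prefix_right (h : Incomparable a b) (hbc : b <+: c) : Incomparable a c :=
  ⟨fun hac => (List.prefix_or_prefix_of_prefix hac hbc).elim h.1 h.2,
    fun hca => h.2 (hbc.trans hca)⟩

theorem append_left (x : List α) (h : Incomparable a b) : Incomparable (x ++ a) (x ++ b) := by
  simpa only [Incomparable, List.prefix_append_right_inj] using h

end Incomparable

theorem incomparable_replicate_false_append_true {j k : ℕ} (hjk : j < k) (t : List Bool) :
    Incomparable (List.replicate j false ++ [true]) (List.replicate k false ++ t) := by
  obtain ⟨d, rfl⟩ := Nat.exists_eq_add_of_lt hjk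
  rw [add_assoc, List.replicate_add, List.replicate_succ, List.append_assoc]
  exact .append_left _ ⟨by simp, by simp⟩

theorem perm_cons_filter_ne {α : Type*} [DecidableEq α] {S : List α} {x : α} (hS : S.Nodup)
    (hx : x ∈ S) : S.Perm (x :: S.filter (· ≠ x)) := by
  have : S.erase x = S.filter (· ≠ x) := by
    rw [hS.erase_eq_filter]
    exact List.filter_congr fun y _ => by by_cases h : y = x <;> simp [h]
  exact this ▸ List.perm_cons_erase hx

theorem inv_two_pow_succ_add_self (m : ℕ) :
    ((2 : ℝ≥0∞) ^ (m + 1))⁻¹ + (2 ^ (m + 1))⁻¹ = (2 ^ m)⁻¹ := by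
  rw [ENNReal.inv_pow, ENNReal.inv_pow, pow_succ, ← mul_add, ENNReal.inv_two_add_inv_two, mul_one]

theorem sum_range_inv_two_pow_add (a d : ℕ) :
    ∑ j ∈ Finset.range d, ((2 : ℝ≥0∞) ^ (a + j + 1))⁻¹ + (2 ^ (a + d))⁻¹ = (2 ^ a)⁻¹ := by
  induction d with
  | zero => simp
  | succ d ih =>
    rw [Finset.sum_range_succ, add_assoc, ← add_assoc a, inv_two_pow_succ_add_self, ih]

theorem sum_inv_two_pow_lt {T : Finset ℕ} {l : ℕ} (hT : ∀ k ∈ T, l < k) :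
    ∑ k ∈ T, ((2 : ℝ≥0∞) ^ k)⁻¹ < (2 ^ l)⁻¹ := by
  set d := T.sup id
  have hTsub : T ⊆ Finset.Ico (l + 1) (l + 1 + d) := fun k hk => by
    have := Finset.le_sup (f := id) hk
    simp only [Finset.mem_Ico]
    grind
  calc ∑ k ∈ T, ((2 : ℝ≥0∞) ^ k)⁻¹
      ≤ ∑ k ∈ Finset.Ico (l + 1) (l + 1 + d), (2 ^ k)⁻¹ := Finset.sum_le_sum_of_subset hTsub
    _ = ∑ j ∈ Finset.range d, (2 ^ (l + j + 1))⁻¹ := by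
        rw [Finset.sum_Ico_eq_sum_range, Nat.add_sub_cancel_left]
        simp only [add_right_comm]
    _ < ∑ j ∈ Finset.range d, (2 ^ (l + j + 1))⁻¹ + (2 ^ (l + d))⁻¹ :=
        ENNReal.lt_add_right (ENNReal.sum_ne_top.2 fun _ _ => by simp) (by simp)
    _ = (2 ^ l)⁻¹ := sum_range_inv_two_pow_add l d

noncomputable def mass (S : List (List Bool)) : ℝ≥0∞ := (S.map fun s => (2 ^ s.length)⁻¹).sum

theorem mass_append (S T : List (List Bool)) : mass (S ++ T) = mass S + mass T := by
  simp [mass]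

theorem mass_cons (x : List Bool) (S : List (List Bool)) :
    mass (x :: S) = (2 ^ x.length)⁻¹ + mass S := by
  simp [mass]

theorem mass_eq_of_perm {S T : List (List Bool)} (h : S.Perm T) : mass S = mass T :=
  (h.map _).sum_eq

/-- A longest string of `S` of length at most `l`; `[]` if there is none. -/
def pick (l : ℕ) (S : List (List Bool)) : List Bool :=
  ((S.filter fun s => s.length ≤ l).argmax List.length).getD []

/-- Together with `pad l x`, these strings `x 0^j 1` partition the extensions of `x` of length
`l`. -/
def pieces (l : ℕ) (x : List Bool) : List (List Bool) :=
  (List.range (l - x.length)).map fun j => x ++ (List.replicate j false ++ [true])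

def pad (l : ℕ) (x : List Bool) : List Bool := x ++ List.replicate (l - x.length) false

/-- Serving a request `l` outputs `pad l (pick l S)`; the free list `S` becomes `allocate l S`. -/
def allocate (l : ℕ) (S : List (List Bool)) : List (List Bool) :=
  S.filter (· ≠ pick l S) ++ pieces l (pick l S)

theorem length_pick_le (l : ℕ) (S : List (List Bool)) : (pick l S).length ≤ l := by
  rw [pick]
  cases h : (S.filter fun s => s.length ≤ l).argmax List.length with
  | none => simp
  | some x => simpa using (List.mem_filter.1 (List.argmax_mem h)).2

theorem pick_spec {l : ℕ} {S : List (List Bool)} {s : List Bool} (hs : s ∈ S)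
    (hsl : s.length ≤ l) : pick l S ∈ S ∧ s.length ≤ (pick l S).length := by
  have hmem : s ∈ S.filter fun s => s.length ≤ l := List.mem_filter.2 ⟨hs, by simpa using hsl⟩
  rw [pick]
  cases h : (S.filter fun s => s.length ≤ l).argmax List.length with
  | none => exact absurd (List.argmax_eq_none.1 h) (List.ne_nil_of_mem hmem)
  | some x => exact ⟨(List.mem_filter.1 (List.argmax_mem h)).1, List.le_of_mem_argmax hmem h⟩

section Pieces

variable {l : ℕ} {x : List Bool}

theorem mem_pieces {p : List Bool} :
    p ∈ pieces l x ↔ ∃ j < l - x.length, p = x ++ (List.replicate j false ++ [true]) := by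
  simp [pieces, eq_comm]

theorem pairwise_incomparable_pieces : (pieces l x).Pairwise Incomparable := by
  rw [pieces, List.pairwise_map]
  exact List.pairwise_lt_range.imp fun hjk =>
    .append_left x (incomparable_replicate_false_append_true hjk [true])

theorem incomparable_pad_of_mem_pieces {p : List Bool} (hp : p ∈ pieces l x) :
    Incomparable (pad l x) p := by
  obtain ⟨j, hj, rfl⟩ := mem_pieces.1 hp
  exact .append_left x (by simpa using (incomparable_replicate_false_append_true hj []).symm)

theorem map_length_pieces :
    (pieces l x).map List.length = (List.range (l - x.length)).map (x.length + · + 1) := by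
  simp [pieces, Function.comp_def, add_assoc]

theorem mass_pieces_add (h : x.length ≤ l) :
    mass (pieces l x) + (2 ^ l)⁻¹ = (2 ^ x.length)⁻¹ := by
  have := sum_range_inv_two_pow_add x.length (l - x.length)
  rw [Nat.add_sub_cancel' h] at this
  rw [← this, mass, pieces, List.map_map, Finset.sum_eq_multiset_sum, Finset.range_val,
    Multiset.range, Multiset.map_coe, Multiset.sum_coe]
  simp [Function.comp_def, add_assoc]

end Pieces

structure IsFreeList (S : List (List Bool)) : Prop where
  pairwise : S.Pairwise Incomparable
  nodup_length : (S.map List.length).Nodup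

namespace IsFreeList

variable {S : List (List Bool)} {l : ℕ}

theorem exists_length_le (hS : IsFreeList S) (hl : (2 ^ l)⁻¹ ≤ mass S) :
    ∃ s ∈ S, s.length ≤ l := by
  by_contra! hlong
  have hmass : mass S = ∑ k ∈ (S.map List.length).toFinset, (2 ^ k)⁻¹ := by
    rw [List.sum_toFinset _ hS.nodup_length, List.map_map]; rfl
  refine (hl.trans_lt ?_).false
  rw [hmass]
  exact sum_inv_two_pow_lt (by simpa using hlong)

theorem pick_mem (hS : IsFreeList S) (hl : (2 ^ l)⁻¹ ≤ mass S) : pick l S ∈ S :=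
  let ⟨_, hs, hsl⟩ := hS.exists_length_le hl
  (pick_spec hs hsl).1

theorem mass_allocate_add (hS : IsFreeList S) (hl : (2 ^ l)⁻¹ ≤ mass S) :
    mass (allocate l S) + (2 ^ l)⁻¹ = mass S := by
  rw [mass_eq_of_perm (perm_cons_filter_ne (hS.nodup_length.of_map _) (hS.pick_mem hl)),
    mass_cons, allocate, mass_append, add_assoc, mass_pieces_add (length_pick_le l S), add_comm]

theorem exists_prefix_of_mem_allocate (hS : IsFreeList S) (hl : (2 ^ l)⁻¹ ≤ mass S)
    {s : List Bool} (hs : s ∈ allocate l S) : ∃ t ∈ S, t <+: s := by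
  rcases List.mem_append.1 hs with hs | hs
  · exact ⟨s, List.mem_of_mem_filter hs, List.prefix_rfl⟩
  · obtain ⟨j, -, rfl⟩ := mem_pieces.1 hs
    exact ⟨_, hS.pick_mem hl, List.prefix_append _ _⟩

theorem incomparable_pad_pick (hS : IsFreeList S) (hl : (2 ^ l)⁻¹ ≤ mass S) {s : List Bool}
    (hs : s ∈ allocate l S) : Incomparable (pad l (pick l S)) s := by
  rcases List.mem_append.1 hs with hs | hs
  · obtain ⟨hsS, hsx⟩ : s ∈ S ∧ s ≠ pick l S := by simpa using hs
    exact ((hS.pairwise.forall hsS (hS.pick_mem hl) hsx).of_prefix_right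
      (List.prefix_append _ _)).symm
  · exact incomparable_pad_of_mem_pieces hs

end IsFreeList

theorem isFreeList_allocate {S : List (List Bool)} {l : ℕ} (hS : IsFreeList S)
    (hl : (2 ^ l)⁻¹ ≤ mass S) : IsFreeList (allocate l S) := by
  set x := pick l S
  have hx : x ∈ S := hS.pick_mem hl
  constructor
  · refine List.pairwise_append.2 ⟨hS.pairwise.filter _, pairwise_incomparable_pieces, ?_⟩
    intro s hs p hp
    obtain ⟨hsS, hsx⟩ : s ∈ S ∧ s ≠ x := by simpa using hs
    obtain ⟨j, -, rfl⟩ := mem_pieces.1 hp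
    exact (hS.pairwise.forall hsS hx hsx).of_prefix_right (List.prefix_append _ _)
  · rw [allocate, List.map_append, List.nodup_append, map_length_pieces]
    refine ⟨(List.filter_sublist.map _).nodup hS.nodup_length,
      List.nodup_range.map fun _ _ h => by omega, ?_⟩
    simp only [List.mem_map, List.mem_range]
    rintro _ ⟨s, hs, rfl⟩ _ ⟨j, hj, rfl⟩ hsj
    have := fun hsl : s.length ≤ l => (pick_spec (List.mem_of_mem_filter hs) hsl).2
    omega

def freeList (f : ℕ → ℕ) : ℕ → List (List Bool)
  | 0 => [[]]
  | n + 1 => allocate (f (n + 1)) (freeList f n)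

def codeword (f : ℕ → ℕ) (n : ℕ) : List Bool :=
  pad (f (n + 1)) (pick (f (n + 1)) (freeList f n))

theorem length_codeword (f : ℕ → ℕ) (n : ℕ) : (codeword f n).length = f (n + 1) := by
  simp [codeword, pad, length_pick_le]

section Invariant

variable {f : ℕ → ℕ}

theorem inv_two_pow_le_mass_of_mass_add_eq_one (hK : kraftSum f ≤ 1) {n : ℕ}
    (hmass : mass (freeList f n) + ∑ m ∈ Finset.range n, ((2 : ℝ≥0∞) ^ f (m + 1))⁻¹ = 1) :
    (2 ^ f (n + 1))⁻¹ ≤ mass (freeList f n) := by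
  have hsum : ∑ m ∈ Finset.range (n + 1), ((2 : ℝ≥0∞) ^ f (m + 1))⁻¹ ≤ 1 :=
    (ENNReal.sum_le_tsum _).trans hK
  rw [Finset.sum_range_succ, ← hmass, add_comm (mass _)] at hsum
  exact ENNReal.le_of_add_le_add_left (ENNReal.sum_ne_top.2 fun _ _ => by simp) hsum

theorem freeList_invariant (hK : kraftSum f ≤ 1) (n : ℕ) :
    IsFreeList (freeList f n) ∧
      mass (freeList f n) + ∑ m ∈ Finset.range n, ((2 : ℝ≥0∞) ^ f (m + 1))⁻¹ = 1 := by
  induction n with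
  | zero =>
    exact ⟨⟨List.pairwise_singleton _ _, List.nodup_singleton _⟩, by simp [freeList, mass]⟩
  | succ n ih =>
    obtain ⟨hS, hmass⟩ := ih
    have hl := inv_two_pow_le_mass_of_mass_add_eq_one hK hmass
    refine ⟨isFreeList_allocate hS hl, ?_⟩
    rw [freeList, Finset.sum_range_succ, ← hmass, ← hS.mass_allocate_add hl]
    ring

theorem isFreeList_freeList (hK : kraftSum f ≤ 1) (n : ℕ) : IsFreeList (freeList f n) :=
  (freeList_invariant hK n).1

theorem inv_two_pow_le_mass_freeList (hK : kraftSum f ≤ 1) (n : ℕ) :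
    (2 ^ f (n + 1))⁻¹ ≤ mass (freeList f n) :=
  inv_two_pow_le_mass_of_mass_add_eq_one hK (freeList_invariant hK n).2

theorem incomparable_codeword_of_mem_freeList (hK : kraftSum f ≤ 1) {m n : ℕ} (hmn : m < n)
    {s : List Bool} (hs : s ∈ freeList f n) : Incomparable (codeword f m) s := by
  induction n, hmn using Nat.le_induction generalizing s with
  | base =>
    exact (isFreeList_freeList hK m).incomparable_pad_pick (inv_two_pow_le_mass_freeList hK m) hs
  | succ n hmn ih =>
    obtain ⟨t, ht, hts⟩ := (isFreeList_freeList hK n).exists_prefix_of_mem_allocate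
      (inv_two_pow_le_mass_freeList hK n) hs
    exact (ih ht).of_prefix_right hts

theorem incomparable_codeword (hK : kraftSum f ≤ 1) {m n : ℕ} (hmn : m < n) :
    Incomparable (codeword f m) (codeword f n) :=
  (incomparable_codeword_of_mem_freeList hK hmn ((isFreeList_freeList hK n).pick_mem
    (inv_two_pow_le_mass_freeList hK n))).of_prefix_right (List.prefix_append _ _)

theorem eq_of_codeword_prefix (hK : kraftSum f ≤ 1) {m n : ℕ}
    (h : codeword f m <+: codeword f n) : m = n := by
  by_contra hmn
  rcases Nat.lt_or_gt_of_ne hmn with hmn | hmn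
  · exact (incomparable_codeword hK hmn).1 h
  · exact (incomparable_codeword hK hmn).2 h

end Invariant

section Computability

open Primrec

theorem _root_.Primrec.list_replicate {α : Type*} [Primcodable α] :
    Primrec₂ (List.replicate : ℕ → α → List α) :=
  (list_map (list_range.comp fst) (snd.comp fst).to₂).of_eq fun _ => by simp [List.map_const']

theorem _root_.Primrec.list_argmax {α β : Type*} [Primcodable α] [Primcodable β]
    {f : α → List β} {g : β → ℕ} (hf : Primrec f) (hg : Primrec g) :
    Primrec fun a => (f a).argmax g := by
  have hstep : Primrec₂ fun (_ : α) (p : Option β × β) =>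
      List.argAux (fun b c => g c < g b) p.1 p.2 :=
    option_casesOn (fst.comp snd) (option_some.comp (snd.comp snd))
      (ite (nat_lt.comp (hg.comp snd) (hg.comp (snd.comp (snd.comp fst))))
        (option_some.comp (snd.comp (snd.comp fst))) (option_some.comp snd)).to₂
  exact list_foldl hf (const none) hstep

theorem primrec_pick : Primrec₂ pick :=
  option_getD.comp (list_argmax ((PrimrecRel.listFilter (R := fun s l => List.length s ≤ l)
    (nat_le.comp (list_length.comp fst) snd)).comp snd fst) list_length) (const [])

theorem primrec_pad : Primrec₂ pad :=
  list_append.comp snd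
    (list_replicate.comp (nat_sub.comp fst (list_length.comp snd)) (const false))

theorem primrec_pieces : Primrec₂ pieces :=
  list_map (list_range.comp (nat_sub.comp fst (list_length.comp snd)))
    (list_append.comp (snd.comp fst)
      (list_append.comp (list_replicate.comp snd (const false)) (const [true]))).to₂

theorem primrec_allocate : Primrec₂ allocate :=
  list_append.comp ((PrimrecRel.listFilter (R := (· ≠ ·)) Primrec.eq.not).comp snd primrec_pick)
    (primrec_pieces.comp fst primrec_pick)

theorem computable_freeList {f : ℕ → ℕ} (hf : Computable f) : Computable (freeList f) := by
  refine (Computable.nat_rec .id (.const [[]])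
    (primrec_allocate.to_comp.comp (hf.comp (Computable.succ.comp (fst.to_comp.comp snd.to_comp)))
      (snd.to_comp.comp snd.to_comp)).to₂).of_eq fun n => ?_
  induction n with
  | zero => rfl
  | succ n ih => simp [freeList, ← ih]

theorem computable_codeword {f : ℕ → ℕ} (hf : Computable f) : Computable (codeword f) :=
  primrec_pad.to_comp.comp (hf.comp .succ)
    (primrec_pick.to_comp.comp (hf.comp .succ) (computable_freeList hf))

end Computability

end KraftChaitin

theorem stmt_4 (f : ℕ → ℕ) (hf : Computable f) (hK : kraftSum f ≤ 1) :
    ∃ g : ℕ → List Bool, Computable g ∧ Function.Injective g ∧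
      (∀ m n : ℕ, g m <+: g n → m = n) ∧ ∀ n : ℕ, (g n).length = f (n + 1) :=
  ⟨KraftChaitin.codeword f, KraftChaitin.computable_codeword hf,
    fun _ _ h => KraftChaitin.eq_of_codeword_prefix hK (h ▸ List.prefix_rfl),
    fun _ _ => KraftChaitin.eq_of_codeword_prefix hK, KraftChaitin.length_codeword f⟩
end

section
/- Let V be an optimal computer. For every computer C there exist an oracle deterministic Turing machine M and d ∈ ℕ such that for all n ∈ ℕ⁺, M with oracle dom V ↾ (n + d) on input n outputs (an encoding of) the finite set dom C ↾ n. -/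
open scoped Classical ENNReal

/-!
Run `C` and record its halting time `t(p)` in unary: this is a computer `E` with the same
domain as `C`. By optimality every `p ∈ dom C` has a `V`-program `q` with `V q = E p` and
`|q| ≤ |p| + d`. So if all of `dom V ↾ (n + d)` is run to completion, the total length of the
outputs bounds `t(p)` for every `p ∈ dom C ↾ n`, and running `C` for that many steps on every
string of length `≤ n` decides `dom C ↾ n`.
-/

section Primrec

variable {α β : Type*} [Primcodable α] [Primcodable β]

theorem Primrec.list_filter {f : α → List β} {p : α → β → Bool} (hf : Primrec f)
    (hp : Primrec₂ p) : Primrec fun a => (f a).filter (p a) := by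
  have hstep : Primrec₂ fun (a : α) (b : β) => bif p a b then [b] else [] :=
    (Primrec.cond hp (Primrec.list_cons.comp Primrec.snd (Primrec.const []))
      (Primrec.const [])).to₂
  refine (Primrec.list_flatMap hf hstep).of_eq fun a => ?_
  induction f a with
  | nil => rfl
  | cons b l ih => cases h : p a b <;> simp [h, ih]

theorem Primrec.list_all {f : α → List β} {p : α → β → Bool} (hf : Primrec f)
    (hp : Primrec₂ p) : Primrec fun a => (f a).all (p a) := by
  have hstep : Primrec₂ fun (a : α) (x : β × Bool) => p a x.1 && x.2 :=
    (Primrec.and.comp (hp.comp Primrec.fst (Primrec.fst.comp Primrec.snd))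
      (Primrec.snd.comp Primrec.snd)).to₂
  refine (Primrec.list_foldr hf (Primrec.const true) hstep).of_eq fun a => ?_
  induction f a with
  | nil => rfl
  | cons b l ih => simp [ih]

theorem Primrec.list_replicate_s8 : Primrec₂ (List.replicate : ℕ → α → List α) :=
  (Primrec.list_map (Primrec.list_range.comp Primrec.fst)
    (Primrec.snd.comp Primrec.fst).to₂).of_eq fun x => by simp [List.map_const']

end Primrec

/-- `g k a` is the result of running `f` on `a` for `k` steps, `none` if it has not halted. -/
structure IsStagedEval {α σ : Type*} (g : ℕ → α → Option σ) (f : α →. σ) : Prop where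
  mono : ∀ {k k' : ℕ} {a : α} {b : σ}, k ≤ k' → b ∈ g k a → b ∈ g k' a
  mem_iff : ∀ {a : α} {b : σ}, b ∈ f a ↔ ∃ k, b ∈ g k a

namespace IsStagedEval

variable {α σ : Type*} {g : ℕ → α → Option σ} {f : α →. σ}

theorem mem_of_mem (hg : IsStagedEval g f) {k : ℕ} {a : α} {b : σ} (h : b ∈ g k a) :
    b ∈ f a :=
  hg.mem_iff.2 ⟨k, h⟩

theorem isSome_mono (hg : IsStagedEval g f) {k k' : ℕ} {a : α} (hk : k ≤ k')
    (h : (g k a).isSome) : (g k' a).isSome := by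
  obtain ⟨b, hb⟩ := Option.isSome_iff_exists.1 h
  exact Option.isSome_iff_exists.2 ⟨b, hg.mono hk hb⟩

theorem dom_iff (hg : IsStagedEval g f) {a : α} : (f a).Dom ↔ ∃ k, (g k a).isSome := by
  simp only [Part.dom_iff_mem, hg.mem_iff, Option.isSome_iff_exists]
  exact exists_comm

theorem eventually_isSome (hg : IsStagedEval g f) {a : α} (h : (f a).Dom) :
    ∀ᶠ k in Filter.atTop, (g k a).isSome := by
  obtain ⟨k, hk⟩ := hg.dom_iff.1 h
  exact Filter.eventually_atTop.2 ⟨k, fun _ hk' => hg.isSome_mono hk' hk⟩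

theorem exists_forall_isSome (hg : IsStagedEval g f) {L : List α} (hL : ∀ a ∈ L, (f a).Dom) :
    ∃ T, ∀ a ∈ L, (g T a).isSome :=
  ((Filter.eventually_all_finite L.finite_toSet).2 fun a ha =>
    hg.eventually_isSome (hL a ha)).exists

end IsStagedEval

open Nat.Partrec Encodable in
theorem Partrec.exists_isStagedEval {α σ : Type*} [Primcodable α] [Primcodable σ]
    {f : α →. σ} (hf : Partrec f) :
    ∃ g : ℕ → α → Option σ, Primrec₂ g ∧ IsStagedEval g f := by
  obtain ⟨c, hc⟩ := Code.exists_code.1 hf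
  have heval : ∀ a, c.eval (encode a) = (f a).map encode := fun a => by simp [hc, encodek]
  refine ⟨fun k a => (c.evaln k (encode a)).bind decode, ?_, ⟨?_, ?_⟩⟩
  · exact Primrec.option_bind (Code.primrec_evaln.comp
      ((Primrec.fst.pair (Primrec.const c)).pair (Primrec.encode.comp Primrec.snd)))
      (Primrec.decode.comp₂ Primrec₂.right)
  · intro k k' a b hk hb
    obtain ⟨m, hm, hdec⟩ := Option.mem_bind_iff.1 hb
    exact Option.mem_bind_iff.2 ⟨m, Code.evaln_mono hk hm, hdec⟩
  · intro a b
    constructor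
    · intro hb
      obtain ⟨k, hk⟩ := Code.evaln_complete.1 (heval a ▸ Part.mem_map encode hb)
      exact ⟨k, Option.mem_bind_iff.2 ⟨_, hk, encodek b⟩⟩
    · rintro ⟨k, hk⟩
      obtain ⟨m, hm, hdec⟩ := Option.mem_bind_iff.1 hk
      obtain ⟨b', hb', rfl⟩ := (Part.mem_map_iff _).1 (heval a ▸ Code.evaln_sound hm)
      rw [Option.mem_def, encodek, Option.some_inj] at hdec
      exact hdec ▸ hb'

theorem mem_allOfLength {n : ℕ} {p : List Bool} : p ∈ allOfLength n ↔ p.length = n := by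
  induction n generalizing p with
  | zero => simp [allOfLength]
  | succ n ih =>
    cases p with
    | nil => simp [allOfLength]
    | cons b p => cases b <;> simp [allOfLength, ih]

theorem mem_allUpTo {n : ℕ} {p : List Bool} : p ∈ allUpTo n ↔ p.length ≤ n := by
  simp [allUpTo, mem_allOfLength]

theorem mem_restrictList {S : Set (List Bool)} {n : ℕ} {p : List Bool} :
    p ∈ restrictList S n ↔ p ∈ S ∧ p.length ≤ n := by
  simp [restrictList, mem_allUpTo, and_comm]

theorem primrec_allOfLength : Primrec allOfLength := by
  have hextend : Primrec fun l : List (List Bool) => l.flatMap fun p => [false :: p, true :: p] :=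
    Primrec.list_flatMap Primrec.id
      (Primrec.list_cons.comp (Primrec.list_cons.comp (Primrec.const false) Primrec.snd)
        (Primrec.list_cons.comp (Primrec.list_cons.comp (Primrec.const true) Primrec.snd)
          (Primrec.const []))).to₂
  refine (Primrec.nat_rec₁ [[]] (hextend.comp₂ Primrec₂.right)).of_eq fun n => ?_
  induction n with
  | zero => rfl
  | succ n ih => simp only [allOfLength, ← ih]

theorem primrec_allUpTo : Primrec allUpTo :=
  Primrec.list_flatMap (Primrec.list_range.comp Primrec.succ)
    (primrec_allOfLength.comp Primrec.snd).to₂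

section StagedEval

variable {α σ : Type*} {g : ℕ → α → Option σ} {f : α →. σ}

def firstStage (g : ℕ → α → Option σ) (a : α) : Part ℕ :=
  Nat.rfind fun k => Part.some (g k a).isSome

theorem firstStage_dom (hg : IsStagedEval g f) {a : α} : (firstStage g a).Dom ↔ (f a).Dom := by
  rw [hg.dom_iff]
  exact Nat.rfind_dom.trans ⟨fun ⟨k, hk, _⟩ => ⟨k, (Part.mem_some_iff.1 hk).symm⟩,
    fun ⟨k, hk⟩ => ⟨k, Part.mem_some_iff.2 hk.symm, fun _ => trivial⟩⟩

theorem isSome_of_mem_firstStage {a : α} {k : ℕ} (h : k ∈ firstStage g a) : (g k a).isSome :=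
  (Part.mem_some_iff.1 (Nat.rfind_spec h)).symm

theorem Partrec.firstStage [Primcodable α] [Primcodable σ] (hg : Primrec₂ g) :
    Partrec (firstStage g) :=
  Partrec.rfind <| Computable₂.partrec₂ <| Primrec₂.to_comp <|
    (Primrec.option_isSome.comp (hg.comp Primrec.snd Primrec.fst) :
      Primrec₂ fun a k => (g k a).isSome)

end StagedEval

def Computer.unaryHaltingTime (C : Computer) {g : ℕ → List Bool → Option (List Bool)}
    (hg : Primrec₂ g) (hgC : IsStagedEval g C.f) : Computer where
  f p := (firstStage g p).map fun k => List.replicate k true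
  partrec := (Partrec.firstStage hg).map <| Primrec₂.to_comp <|
    Primrec.list_replicate_s8.comp₂ Primrec₂.right (Primrec.const true).to₂
  prefixFree p q hp hq := C.prefixFree p q ((firstStage_dom hgC).1 hp) ((firstStage_dom hgC).1 hq)

theorem Computer.unaryHaltingTime_dom (C : Computer) {g : ℕ → List Bool → Option (List Bool)}
    (hg : Primrec₂ g) (hgC : IsStagedEval g C.f) {p : List Bool} :
    ((C.unaryHaltingTime hg hgC).f p).Dom ↔ (C.f p).Dom :=
  firstStage_dom hgC

theorem Computer.exists_get_unaryHaltingTime (C : Computer)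
    {g : ℕ → List Bool → Option (List Bool)} (hg : Primrec₂ g) (hgC : IsStagedEval g C.f)
    {p : List Bool} (h : ((C.unaryHaltingTime hg hgC).f p).Dom) :
    ∃ k, (g k p).isSome ∧ ((C.unaryHaltingTime hg hgC).f p).get h = List.replicate k true :=
  ⟨_, isSome_of_mem_firstStage (Part.get_mem (o := firstStage g p) h), rfl⟩

section Decider

variable {α β σ : Type*}

def stageBound (g : ℕ → α → Option (List β)) (L : List α) (T : ℕ) : ℕ :=
  (L.flatMap fun q => (g T q).getD []).length

theorem length_le_stageBound {g : ℕ → α → Option (List β)} {L : List α} {q : α} (hq : q ∈ L)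
    (T : ℕ) : ((g T q).getD []).length ≤ stageBound g L T := by
  rw [stageBound, List.length_flatMap]
  exact List.le_sum_of_mem (List.mem_map_of_mem hq)

theorem Primrec.stageBound [Primcodable α] [Primcodable β] {g : ℕ → α → Option (List β)}
    (hg : Primrec₂ g) : Primrec₂ (stageBound g) :=
  Primrec.list_length.comp (Primrec.list_flatMap Primrec.fst
    (Primrec.option_getD.comp (hg.comp (Primrec.snd.comp Primrec.fst) Primrec.snd)
      (Primrec.const [])).to₂)

def restrictionDecider (gV : ℕ → List Bool → Option (List Bool))
    (gC : ℕ → List Bool → Option σ) (L : List (List Bool)) (n : ℕ) :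
    Part (List (List Bool)) :=
  (Nat.rfind fun T => Part.some (L.all fun q => (gV T q).isSome)).map fun T =>
    (allUpTo n).filter fun p => (gC (stageBound gV L T) p).isSome

theorem Partrec.restrictionDecider [Primcodable σ] {gV : ℕ → List Bool → Option (List Bool)}
    {gC : ℕ → List Bool → Option σ} (hgV : Primrec₂ gV) (hgC : Primrec₂ gC) :
    Partrec₂ (restrictionDecider gV gC) := by
  have hall : Primrec₂ fun (L : List (List Bool)) (T : ℕ) => L.all fun q => (gV T q).isSome :=
    Primrec.list_all Primrec.fst
      (Primrec.option_isSome.comp (hgV.comp (Primrec.snd.comp Primrec.fst) Primrec.snd)).to₂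
  have hfilter : Primrec₂ fun (x : List (List Bool) × ℕ) (T : ℕ) =>
      (allUpTo x.2).filter fun p => (gC (stageBound gV x.1 T) p).isSome :=
    Primrec.list_filter (primrec_allUpTo.comp (Primrec.snd.comp Primrec.fst))
      (Primrec.option_isSome.comp (hgC.comp
        ((Primrec.stageBound hgV).comp (Primrec.fst.comp (Primrec.fst.comp Primrec.fst))
          (Primrec.snd.comp Primrec.fst))
        Primrec.snd)).to₂
  exact Partrec.map
    (Partrec.rfind (Primrec₂.to_comp
      (hall.comp₂ (Primrec.fst.comp₂ Primrec₂.left) Primrec₂.right)).partrec₂)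
    (Primrec₂.to_comp hfilter)

theorem restrictionDecider_eq {gV : ℕ → List Bool → Option (List Bool)}
    {gC : ℕ → List Bool → Option σ} {fV : List Bool →. List Bool} {fC : List Bool →. σ}
    (hgV : IsStagedEval gV fV) (hgC : IsStagedEval gC fC) {L : List (List Bool)} {n : ℕ}
    (hL : ∀ q ∈ L, (fV q).Dom)
    (hcover : ∀ p, (fC p).Dom → p.length ≤ n →
      ∃ q ∈ L, ∃ k, (gC k p).isSome ∧ List.replicate k true ∈ fV q) :
    restrictionDecider gV gC L n = Part.some (restrictList {p | (fC p).Dom} n) := by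
  obtain ⟨T₀, hT₀⟩ := hgV.exists_forall_isSome hL
  have hdom : (Nat.rfind fun T => Part.some (L.all fun q => (gV T q).isSome)).Dom :=
    Nat.rfind_dom'.2 ⟨T₀, Part.mem_some_iff.2 (List.all_eq_true.2 hT₀).symm, fun _ => trivial⟩
  obtain ⟨T, hT⟩ := Part.dom_iff_mem.1 hdom
  have hall : ∀ q ∈ L, (gV T q).isSome :=
    List.all_eq_true.1 (Part.mem_some_iff.1 (Nat.rfind_spec hT)).symm
  refine Part.eq_some_iff.2 ((Part.mem_map_iff _).2 ⟨T, hT, List.filter_congr fun p hp => ?_⟩)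
  rw [Bool.eq_iff_iff, decide_eq_true_iff]
  refine ⟨fun h => hgC.dom_iff.2 ⟨_, h⟩, fun hpC => ?_⟩
  obtain ⟨q, hq, k, hk, hkq⟩ := hcover p hpC (mem_allUpTo.1 hp)
  obtain ⟨v, hv⟩ := Option.isSome_iff_exists.1 (hall q hq)
  have hvk : v = List.replicate k true := Part.mem_unique (hgV.mem_of_mem hv) hkq
  have hkB : k ≤ stageBound gV L T := by
    simpa [hv, hvk] using length_le_stageBound (g := gV) hq T
  exact hgC.isSome_mono hkB hk

end Decider

theorem stmt_8 (V : Computer) (hV : V.IsOptimal) (C : Computer) :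
    ∃ M : List (List Bool) → ℕ →. List (List Bool), Partrec₂ M ∧ ∃ d : ℕ,
      ∀ n : ℕ, 1 ≤ n →
        M (restrictList (domSet V) (n + d)) n =
          Part.some (restrictList (domSet C) n) := by
  obtain ⟨gV, hgV, hV_stages⟩ := V.partrec.exists_isStagedEval
  obtain ⟨gC, hgC, hC_stages⟩ := C.partrec.exists_isStagedEval
  obtain ⟨d, hd⟩ := hV (C.unaryHaltingTime hgC hC_stages)
  refine ⟨restrictionDecider gV gC, Partrec.restrictionDecider hgV hgC, d, fun n _ => ?_⟩
  refine restrictionDecider_eq hV_stages hC_stages (fun q hq => (mem_restrictList.1 hq).1) ?_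
  intro p hp hpn
  have hE := (C.unaryHaltingTime_dom hgC hC_stages).2 hp
  obtain ⟨k, hk, hget⟩ := C.exists_get_unaryHaltingTime hgC hC_stages hE
  obtain ⟨q, hVq, hqlen⟩ := hd p hE
  have hq : List.replicate k true ∈ V.f q := hget ▸ Part.eq_some_iff.1 hVq
  exact ⟨q, mem_restrictList.2 ⟨Part.dom_iff_mem.2 ⟨_, hq⟩, by omega⟩, k, hk, hq⟩
end

section
/- Let V be an optimal computer and M a deterministic Turing machine computing V. Then n = H(T^M_n, n) + O(1) = H(T^M_n) + O(1) for all n ≥ L_M, where T^M_n is the maximum running time of M over all halting inputs of length at most n, and L_M is the minimum length of a halting input for M. -/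
open scoped Classical ENNReal

/-!
Upper bound: if `p` is a slowest halting input of length at most `n`, the padded program
`0^(n - |p|) 1 p` has length `n + 1`, and from it a machine recovers `T_n` (by running `M` on `p`)
and `n` (from the total length). Lower bound: from `T_n` one can list every output of `M` within
`T_n` steps, which includes `V(p)` for every halting `p` of length at most `n`; a string outside
this list has `V`-complexity above `n`, so optimality of `V` gives `n < H(T_n) + O(1)`.
Finally `H(T_n) ≤ H(T_n, n) + O(1)` by projecting the pair.
-/

open Nat.Partrec (Code)
open Nat.Partrec.Code Encodable

namespace Computer

theorem H_le_length {C : Computer} {s p : List Bool} (h : C.f p = Part.some s) :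
    C.H s ≤ p.length :=
  sInf_le ⟨p, h, rfl⟩

theorem exists_length_eq_H {C : Computer} {s : List Bool} (h : C.H s ≠ ⊤) :
    ∃ p, C.f p = Part.some s ∧ (p.length : ℕ∞) = C.H s := by
  have hne : {n : ℕ∞ | ∃ p : List Bool, C.f p = Part.some s ∧ (p.length : ℕ∞) = n}.Nonempty :=
    Set.nonempty_iff_ne_empty.2 fun he => h (by rw [H, he, sInf_empty])
  exact csInf_mem hne

def map (C : Computer) (g : List Bool → List Bool) (hg : Computable g) : Computer where
  f q := (C.f q).map g
  partrec := C.partrec.map (hg.comp Computable.snd).to₂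
  prefixFree p q hp hq := C.prefixFree p q hp hq

theorem H_map_le (C : Computer) {g : List Bool → List Bool} (hg : Computable g)
    (s : List Bool) : (C.map g hg).H (g s) ≤ C.H s := by
  rcases eq_or_ne (C.H s) ⊤ with h | h
  · simp [h]
  obtain ⟨p, hp, hl⟩ := exists_length_eq_H h
  rw [← hl]
  exact H_le_length (show (C.f p).map g = Part.some (g s) by rw [hp, Part.map_some])

theorem IsOptimal.exists_H_le {U : Computer} (hU : U.IsOptimal) (C : Computer) :
    ∃ d : ℕ, ∀ s, U.H s ≤ C.H s + d := by
  obtain ⟨d, hd⟩ := hU C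
  refine ⟨d, fun s => ?_⟩
  rcases eq_or_ne (C.H s) ⊤ with h | h
  · simp [h]
  obtain ⟨p, hp, hl⟩ := exists_length_eq_H h
  obtain ⟨q, hq, hql⟩ := hd p (by simp [hp])
  calc U.H s ≤ q.length := H_le_length (by simpa [hp] using hq)
    _ ≤ p.length + d := by exact_mod_cast hql
    _ = C.H s + d := by rw [hl]

theorem IsOptimal.exists_H_apply_le {U : Computer} (hU : U.IsOptimal)
    {g : List Bool → List Bool} (hg : Computable g) : ∃ d : ℕ, ∀ s, U.H (g s) ≤ U.H s + d := by
  obtain ⟨d, hd⟩ := hU.exists_H_le (U.map g hg)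
  exact ⟨d, fun s => (hd (g s)).trans (by gcongr; exact U.H_map_le hg s)⟩

def onNil : Computer where
  f p := if p = [] then Part.some [] else Part.none
  partrec := by
    have : Computable fun p : List Bool => if p = [] then some ([] : List Bool) else none :=
      (Primrec.ite (Primrec.eq.comp Primrec.id (Primrec.const [])) (Primrec.const (some []))
        (Primrec.const none)).to_comp
    exact (Computable.ofOption this).of_eq fun p => by split_ifs <;> simp
  prefixFree p q hp hq _ := by
    split_ifs at hp hq with h₁ h₂
    · rw [h₁, h₂]
    all_goals simp_all

theorem IsOptimal.exists_dom {U : Computer} (hU : U.IsOptimal) : ∃ p, (U.f p).Dom := by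
  obtain ⟨d, hd⟩ := hU onNil
  obtain ⟨q, hq, -⟩ := hd [] (by simp [onNil])
  exact ⟨q, by rw [hq]; trivial⟩

theorem IsOptimal.exists_dom_length_le {V : Computer} (hV : V.IsOptimal) {n : ℕ}
    (hn : minLen V ≤ n) : ∃ p, (V.f p).Dom ∧ p.length ≤ n := by
  obtain ⟨p, hp⟩ := hV.exists_dom
  obtain ⟨q, hq, hl⟩ := Nat.sInf_mem (⟨p.length, p, hp, rfl⟩ :
    {k : ℕ | ∃ p : List Bool, (V.f p).Dom ∧ p.length = k}.Nonempty)
  exact ⟨q, hq, hl ▸ hn⟩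

end Computer

theorem Nat.bits_eq_cons_of_ne_zero {n : ℕ} (h : n ≠ 0) :
    n.bits = decide (n % 2 = 1) :: (n / 2).bits := by
  obtain ⟨k, rfl | rfl⟩ := Nat.even_or_odd' n
  · rw [Nat.bit0_bits k (by omega)]
    simp
  · rw [Nat.bit1_bits k]
    simp [Nat.add_mod, show (2 * k + 1) / 2 = k by omega]

theorem Primrec.nat_bits : Primrec Nat.bits := by
  refine (Primrec.nat_strong_rec (fun (_ : Unit) n => n.bits)
    (g := fun _ l => some (if l.length = 0 then [] else
      decide (l.length % 2 = 1) :: l.getD (l.length / 2) [])) ?_ ?_).comp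
    (Primrec.const ()) Primrec.id
  · have hlen := Primrec.list_length.comp (Primrec.snd (α := Unit) (β := List (List Bool)))
    exact Primrec.option_some.comp <| Primrec.ite (Primrec.eq.comp hlen (Primrec.const 0))
      (Primrec.const []) <| Primrec.list_cons.comp
        (Primrec.eq.comp (Primrec.nat_mod.comp hlen (Primrec.const 2)) (Primrec.const 1)).decide
        ((Primrec.list_getD []).comp Primrec.snd (Primrec.nat_div.comp hlen (Primrec.const 2)))
  · intro _ n
    rcases Nat.eq_zero_or_pos n with rfl | hn
    · simp
    · simp [List.getD_eq_getElem?_getD, Nat.div_lt_self hn, hn.ne',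
        ← Nat.bits_eq_cons_of_ne_zero hn.ne']

theorem primrec_natToStr : Primrec natToStr :=
  (Primrec.list_tail.comp (Primrec.list_reverse.comp (Primrec.nat_bits.comp Primrec.succ))).of_eq
    fun n => by rw [natToStr, List.tail_reverse]

/-- Reads `1s` in binary, minus one. -/
def strToNat (s : List Bool) : ℕ := s.foldl (fun a b => 2 * a + cond b 1 0) 1 - 1

theorem primrec_strToNat : Primrec strToNat :=
  Primrec.nat_sub.comp (Primrec.list_foldl Primrec.id (Primrec.const 1)
    (Primrec.nat_add.comp (Primrec.nat_mul.comp (Primrec.const 2) (Primrec.fst.comp Primrec.snd))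
      (Primrec.cond (Primrec.snd.comp Primrec.snd) (Primrec.const 1)
        (Primrec.const 0))).to₂) (Primrec.const 1)

theorem foldl_dropLast_bits {m : ℕ} (hm : m ≠ 0) :
    m.bits.dropLast.reverse.foldl (fun a b => 2 * a + cond b 1 0) 1 = m := by
  induction m using Nat.strong_induction_on with
  | _ m ih =>
    by_cases h1 : m = 1
    · simp [h1, Nat.one_bits]
    have hhalf : m / 2 ≠ 0 := by omega
    rw [Nat.bits_eq_cons_of_ne_zero hm,
      List.dropLast_cons_of_ne_nil (by simp [Nat.bits_eq_cons_of_ne_zero hhalf]),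
      List.reverse_cons, List.foldl_append, ih _ (by omega) hhalf]
    rcases Nat.mod_two_eq_zero_or_one m with h | h <;> simp [h] <;> omega

theorem strToNat_natToStr (n : ℕ) : strToNat (natToStr n) = n := by
  rw [strToNat, natToStr, foldl_dropLast_bits n.succ_ne_zero, Nat.succ_sub_one]

theorem Nat.rfind_eq_some_sInf {P : ℕ → Bool} (h : ∃ k, P k) :
    Nat.rfind (fun k => Part.some (P k)) = Part.some (sInf {k | P k}) := by
  refine Part.eq_some_iff.2 (Nat.mem_rfind.2 ⟨?_, fun hm => ?_⟩)
  · exact Part.mem_some_iff.2 (Nat.sInf_mem (s := {k | P k}) h).symm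
  · simpa using Nat.notMem_of_lt_sInf hm

theorem bddAbove_runtime (V : Computer) (c : Code) (n : ℕ) :
    BddAbove {t : ℕ | ∃ p : List Bool, (V.f p).Dom ∧ p.length ≤ n ∧ runtime c p = t} :=
  ((List.finite_length_le Bool n).image (runtime c)).subset (by
    rintro _ ⟨p, -, hl, rfl⟩
    exact ⟨p, hl, rfl⟩) |>.bddAbove

section Runtime

variable {V : Computer} {c : Code}

theorem dom_of_evaln_isSome (hc : ComputesVia c V) {k : ℕ} {p : List Bool}
    (h : (evaln k c (encode p)).isSome) : (V.f p).Dom := by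
  obtain ⟨y, hy⟩ := Option.isSome_iff_exists.1 h
  have hs := evaln_sound (Option.mem_def.2 hy)
  rw [hc p] at hs
  obtain ⟨a, ha, -⟩ := (Part.mem_map_iff _).1 hs
  exact Part.dom_iff_mem.2 ⟨a, ha⟩

theorem exists_evaln_isSome (hc : ComputesVia c V) {p : List Bool} (h : (V.f p).Dom) :
    ∃ k, (evaln k c (encode p)).isSome := by
  have hmem : encode ((V.f p).get h) ∈ c.eval (encode p) := by
    rw [hc p]
    exact (Part.mem_map_iff _).2 ⟨_, Part.get_mem h, rfl⟩
  obtain ⟨k, hk⟩ := evaln_complete.1 hmem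
  exact ⟨k, Option.isSome_iff_exists.2 ⟨_, hk⟩⟩

theorem evaln_runtime (hc : ComputesVia c V) {p : List Bool} (h : (V.f p).Dom) :
    evaln (runtime c p) c (encode p) = some (encode ((V.f p).get h)) := by
  obtain ⟨y, hy⟩ := Option.isSome_iff_exists.1 (Nat.sInf_mem (exists_evaln_isSome hc h))
  obtain ⟨a, ha, rfl⟩ := (Part.mem_map_iff _).1 (hc p ▸ evaln_sound (Option.mem_def.2 hy))
  rw [Part.get_eq_of_mem ha h]
  exact hy

theorem rfind_evaln_eq_runtime (hc : ComputesVia c V) {p : List Bool} (h : (V.f p).Dom) :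
    Nat.rfind (fun k => Part.some (evaln k c (encode p)).isSome) = Part.some (runtime c p) :=
  Nat.rfind_eq_some_sInf (exists_evaln_isSome hc h)

theorem runtime_le_maxTime {n : ℕ} {p : List Bool} (hd : (V.f p).Dom) (hl : p.length ≤ n) :
    runtime c p ≤ maxTime c V n :=
  le_csSup (bddAbove_runtime V c n) ⟨p, hd, hl, rfl⟩

theorem exists_runtime_eq_maxTime {n : ℕ} (h : ∃ p, (V.f p).Dom ∧ p.length ≤ n) :
    ∃ p, (V.f p).Dom ∧ p.length ≤ n ∧ runtime c p = maxTime c V n := by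
  obtain ⟨p, hd, hl⟩ := h
  exact Nat.sSup_mem (s := {t | ∃ p, (V.f p).Dom ∧ p.length ≤ n ∧ runtime c p = t})
    ⟨_, p, hd, hl, rfl⟩ (bddAbove_runtime V c n)

end Runtime

/-- Strips the self-delimiting header `0^m 1` from a padded program `0^m 1 p`. -/
def unpad (q : List Bool) : List Bool := q.drop (q.idxOf true + 1)

theorem eq_replicate_append_unpad {q : List Bool} (h : true ∈ q) :
    q = List.replicate (q.idxOf true) false ++ true :: unpad q := by
  induction q with
  | nil => simp at h
  | cons b q ih =>
    cases b
    · rw [unpad, List.idxOf_cons_ne _ (by decide), List.drop_succ_cons, List.replicate_succ,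
        List.cons_append]
      exact congrArg (false :: ·) (ih (by simpa using h))
    · simp [unpad]

theorem idxOf_replicate_append (m : ℕ) (p : List Bool) :
    (List.replicate m false ++ true :: p).idxOf true = m := by
  induction m with
  | zero => simp
  | succ m ih => rw [List.replicate_succ, List.cons_append, List.idxOf_cons_ne _ (by decide), ih]

theorem unpad_replicate_append (m : ℕ) (p : List Bool) :
    unpad (List.replicate m false ++ true :: p) = p := by
  rw [unpad, idxOf_replicate_append, ← List.singleton_append, ← List.append_assoc]
  exact List.drop_left' (by simp)

theorem replicate_append_prefix_iff {m m' : ℕ} {p p' : List Bool} :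
    List.replicate m false ++ true :: p <+: List.replicate m' false ++ true :: p' ↔
      m = m' ∧ p <+: p' := by
  induction m generalizing m' with
  | zero => cases m' <;> simp [List.replicate_succ]
  | succ m ih => cases m' <;> simp [List.replicate_succ, ih]

def padRun (c : Code) (q : List Bool) : Part (List Bool) :=
  (Nat.rfind fun k => Part.some
      (decide (q.idxOf true < q.length) && (evaln k c (encode (unpad q))).isSome)).map
    fun t => natToStr (Nat.pair t (q.length - 1))

theorem partrec_padRun (c : Code) : Partrec (padRun c) := by
  have hunpad : Primrec unpad := Primrec.list_drop.comp
    (Primrec.succ.comp (Primrec.list_idxOf.comp (Primrec.const true) Primrec.id)) Primrec.id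
  refine Partrec.map (Partrec.rfind (Computable₂.partrec₂ ?_)) ?_
  · exact (Primrec.and.comp
      (Primrec.nat_lt.comp (Primrec.list_idxOf.comp (Primrec.const true) Primrec.fst)
        (Primrec.list_length.comp Primrec.fst)).decide
      (Primrec.option_isSome.comp (primrec_evaln.comp
        ((Primrec.snd.pair (Primrec.const c)).pair
          (Primrec.encode.comp (hunpad.comp Primrec.fst)))))).to_comp
  · exact (primrec_natToStr.comp (Primrec₂.natPair.comp Primrec.snd
      (Primrec.nat_sub.comp (Primrec.list_length.comp Primrec.fst) (Primrec.const 1)))).to_comp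

section Padding

variable {V : Computer} {c : Code}

theorem exists_eq_replicate_append_of_dom_padRun (hc : ComputesVia c V) {q : List Bool}
    (h : (padRun c q).Dom) :
    ∃ m p, q = List.replicate m false ++ true :: p ∧ (V.f p).Dom := by
  obtain ⟨k, hk, -⟩ := Nat.rfind_dom.1 h
  simp only [Part.mem_some_iff, eq_comm (a := true), Bool.and_eq_true, decide_eq_true_eq,
    List.idxOf_lt_length_iff] at hk
  exact ⟨_, _, eq_replicate_append_unpad hk.1, dom_of_evaln_isSome hc hk.2⟩

theorem padRun_replicate_append (hc : ComputesVia c V) {p : List Bool} (hp : (V.f p).Dom)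
    (m : ℕ) : padRun c (List.replicate m false ++ true :: p) =
      Part.some (natToStr (Nat.pair (runtime c p) (m + p.length))) := by
  have hmem : true ∈ List.replicate m false ++ true :: p := by simp
  simp only [padRun, unpad_replicate_append, List.idxOf_lt_length_iff.2 hmem, decide_true,
    Bool.true_and, rfind_evaln_eq_runtime hc hp, Part.map_some]
  simp

def padComp (V : Computer) (c : Code) (hc : ComputesVia c V) : Computer where
  f := padRun c
  partrec := partrec_padRun c
  prefixFree q q' hq hq' hqq' := by
    obtain ⟨m, p, rfl, hp⟩ := exists_eq_replicate_append_of_dom_padRun hc hq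
    obtain ⟨m', p', rfl, hp'⟩ := exists_eq_replicate_append_of_dom_padRun hc hq'
    obtain ⟨rfl, hpp'⟩ := replicate_append_prefix_iff.1 hqq'
    rw [V.prefixFree p p' hp hp' hpp']

theorem padComp_H_pair_maxTime_le (hc : ComputesVia c V) {n : ℕ}
    (h : ∃ p, (V.f p).Dom ∧ p.length ≤ n) :
    (padComp V c hc).H (natToStr (Nat.pair (maxTime c V n) n)) ≤ n + 1 := by
  obtain ⟨p, hp, hl, ht⟩ := exists_runtime_eq_maxTime h
  have hrun := padRun_replicate_append hc hp (n - p.length)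
  rw [ht, Nat.sub_add_cancel hl] at hrun
  have hlen : (List.replicate (n - p.length) false ++ true :: p).length = n + 1 := by
    simp only [List.length_append, List.length_replicate, List.length_cons]
    omega
  simpa [hlen] using (padComp V c hc).H_le_length hrun

end Padding

def outLen (c : Code) (t x : ℕ) : ℕ :=
  (((evaln t c x).bind (decode (α := List Bool))).getD []).length

/-- A string longer than every output of `c` within `t` steps; `evaln t` only accepts inputs
below `t`, so finitely many outputs need to be checked. -/
def diag (c : Code) (t : ℕ) : List Bool :=
  List.replicate (((List.range t).map (outLen c t)).sum + 1) true

theorem primrec_diag (c : Code) : Primrec (diag c) := by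
  have houtLen : Primrec₂ (outLen c) :=
    (Primrec.list_length.comp (Primrec.option_getD.comp
      (Primrec.option_bind
        (primrec_evaln.comp ((Primrec.fst.pair (Primrec.const c)).pair Primrec.snd))
        (Primrec.decode.comp Primrec.snd).to₂)
      (Primrec.const []))).to₂
  have hsum : Primrec fun t => ((List.range t).map (outLen c t)).sum :=
    Primrec.list_foldr (Primrec.list_map Primrec.list_range houtLen) (Primrec.const 0)
      (Primrec.nat_add.comp (Primrec.fst.comp Primrec.snd) (Primrec.snd.comp Primrec.snd)).to₂
  have hreplicate : Primrec fun n => List.replicate n true :=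
    (Primrec.list_map Primrec.list_range (Primrec.const true).to₂).of_eq fun n => by simp
  exact hreplicate.comp (Primrec.succ.comp hsum)

section Diagonal

variable {V : Computer} {c : Code}

theorem length_lt_length_diag (hc : ComputesVia c V) {p : List Bool} (hp : (V.f p).Dom) {t : ℕ}
    (ht : runtime c p ≤ t) : ((V.f p).get hp).length < (diag c t).length := by
  have hev : evaln t c (encode p) = some (encode ((V.f p).get hp)) :=
    evaln_mono ht (evaln_runtime hc hp)
  have hlen : outLen c t (encode p) = ((V.f p).get hp).length := by simp [outLen, hev]
  have hle : outLen c t (encode p) ≤ ((List.range t).map (outLen c t)).sum :=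
    List.le_sum_of_mem (List.mem_map_of_mem (List.mem_range.2 (evaln_bound hev)))
  simp only [diag, List.length_replicate]
  omega

theorem add_one_le_H_diag_maxTime (hc : ComputesVia c V) (n : ℕ) :
    (n : ℕ∞) + 1 ≤ V.H (diag c (maxTime c V n)) := by
  refine le_sInf ?_
  rintro _ ⟨p, hp, rfl⟩
  have hdom : (V.f p).Dom := by rw [hp]; trivial
  by_contra! hl
  have hl : p.length ≤ n := by exact_mod_cast Order.le_of_lt_add_one hl
  have := length_lt_length_diag hc hdom (runtime_le_maxTime hdom hl)
  simp [hp] at this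

end Diagonal

theorem stmt_16 (U : Computer) (hU : U.IsOptimal) (V : Computer) (hV : V.IsOptimal)
    (c : Nat.Partrec.Code) (hc : ComputesVia c V) :
    ∃ d : ℕ, ∀ n : ℕ, minLen V ≤ n →
      ((n : ℕ∞) ≤ HPairN U (maxTime c V n) n + d ∧
        HPairN U (maxTime c V n) n ≤ (n : ℕ∞) + d) ∧
      ((n : ℕ∞) ≤ HN U (maxTime c V n) + d ∧
        HN U (maxTime c V n) ≤ (n : ℕ∞) + d) := by
  obtain ⟨dPad, hPad⟩ := hU.exists_H_le (padComp V c hc)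
  obtain ⟨dFst, hFst⟩ := hU.exists_H_apply_le
    (primrec_natToStr.comp (Primrec.fst.comp (Primrec.unpair.comp primrec_strToNat))).to_comp
  obtain ⟨dDiag, hDiag⟩ := hU.exists_H_apply_le
    ((primrec_diag c).comp primrec_strToNat).to_comp
  obtain ⟨dVU, hVU⟩ := hV.exists_H_le U
  refine ⟨dPad + dFst + dDiag + dVU + 1, fun n hn => ?_⟩
  set T := maxTime c V n
  have hupper : HPairN U T n ≤ n + 1 + dPad :=
    (hPad _).trans (by gcongr; exact padComp_H_pair_maxTime_le hc (hV.exists_dom_length_le hn))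
  have hfst : HN U T ≤ HPairN U T n + dFst := by
    simpa [HN, HPairN, strToNat_natToStr] using hFst (natToStr (Nat.pair T n))
  have hlower : (n : ℕ∞) + 1 ≤ HN U T + dDiag + dVU :=
    calc (n : ℕ∞) + 1 ≤ V.H (diag c T) := add_one_le_H_diag_maxTime hc n
      _ ≤ U.H (diag c T) + dVU := hVU _
      _ ≤ HN U T + dDiag + dVU := by
        gcongr; simpa [HN, strToNat_natToStr] using hDiag (natToStr T)
  lift HPairN U T n to ℕ using ne_top_of_le_ne_top (by simp) hupper with x
  lift HN U T to ℕ using ne_top_of_le_ne_top (by simp) hfst with y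
  norm_cast at *
  omega
end
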